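/- arXiv:2604.08246 — 4 statements merged into one kernel-verified Lean document; each statement's English description precedes it below -/
import Mathlib

section
/- Let V be a real normed space, E : V → ℝ ∪ {+∞} convex, proper, and lower semicontinuous, and suppose E(v) → ∞ as ‖v‖ → ∞ (coercivity). If V is a reflexive Banach space, then E attains its minimum on V: there exists u ∈ V with E(u) = inf E(V). -/
/-!
Convexity makes every sublevel set of `E` convex, and a closed convex set is weakly closed
(Hahn–Banach), so `E` stays lower semicontinuous for the weak topology. By coercivity a nonempty
sublevel set is bounded; in a reflexive space bounded weakly closed sets are weakly compact
(Banach–Alaoglu in the bidual), and a lower semicontinuous function attains its minimum there.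
-/

open Set Metric

lemma quasiconvexOn_univ_of_le_convex_combination {V : Type*} [AddCommMonoid V] [Module ℝ V]
    {f : V → EReal}
    (hf : ∀ x y : V, ∀ t : ℝ, 0 ≤ t → t ≤ 1 →
      f (t • x + (1 - t) • y) ≤ (t : EReal) * f x + ((1 - t : ℝ) : EReal) * f y) :
    QuasiconvexOn ℝ univ f := by
  rintro r x ⟨-, hx⟩ y ⟨-, hy⟩ a b ha hb hab
  obtain rfl : b = 1 - a := by linarith
  refine ⟨mem_univ _, ?_⟩
  calc f (a • x + (1 - a) • y)
      ≤ (a : EReal) * f x + ((1 - a : ℝ) : EReal) * f y := hf x y a ha (by linarith)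
    _ ≤ (a : EReal) * r + ((1 - a : ℝ) : EReal) * r := by gcongr
    _ = r := by
      rw [← EReal.right_distrib_of_nonneg (by exact_mod_cast ha) (by exact_mod_cast hb),
        ← EReal.coe_add, add_sub_cancel, EReal.coe_one, one_mul]

lemma LowerSemicontinuous.comp_toWeakSpace_symm {V β : Type*} [AddCommGroup V] [Module ℝ V]
    [TopologicalSpace V] [IsTopologicalAddGroup V] [ContinuousSMul ℝ V] [LocallyConvexSpace ℝ V]
    [LinearOrder β] {f : V → β} (hf : LowerSemicontinuous f) (hq : QuasiconvexOn ℝ univ f) :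
    LowerSemicontinuous fun x : WeakSpace ℝ V => f ((toWeakSpace ℝ V).symm x) := by
  refine lowerSemicontinuous_iff_isClosed_preimage.2 fun r => ?_
  have hconv : Convex ℝ (f ⁻¹' Iic r) := fun x hx y hy a b ha hb hab =>
    (hq r ⟨mem_univ x, hx⟩ ⟨mem_univ y, hy⟩ ha hb hab).2
  have : (fun x : WeakSpace ℝ V => f ((toWeakSpace ℝ V).symm x)) ⁻¹' Iic r
      = toWeakSpace ℝ V '' (f ⁻¹' Iic r) := by
    rw [LinearEquiv.image_eq_preimage_symm]; rfl
  rw [this, ← closure_eq_iff_isClosed, ← hconv.toWeakSpace_closure ℝ,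
    (hf.isClosed_preimage r).closure_eq]

lemma isCompact_of_isBounded_of_surjective_inclusionInDoubleDual {V : Type*}
    [NormedAddCommGroup V] [NormedSpace ℝ V]
    (hrefl : Function.Surjective (NormedSpace.inclusionInDoubleDual ℝ V))
    {S : Set (WeakSpace ℝ V)} (hb : Bornology.IsBounded (toWeakSpace ℝ V ⁻¹' S))
    (hS : IsClosed S) : IsCompact S := by
  rw [← hS.closure_eq]
  refine NormedSpace.isCompact_closure_of_isBounded ℝ V S hb ?_
  rintro z -
  obtain ⟨x, hx⟩ := hrefl z
  exact ⟨toWeakSpace ℝ V x, hx⟩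

lemma LowerSemicontinuous.exists_forall_le_of_isCompact_sublevel {α β : Type*}
    [TopologicalSpace α] [LinearOrder β] {f : α → β} (hf : LowerSemicontinuous f) {x₀ : α}
    (hK : IsCompact {x | f x ≤ f x₀}) : ∃ u, ∀ v, f u ≤ f v := by
  obtain ⟨u, hu, hmin⟩ :=
    (hf.lowerSemicontinuousOn _).exists_isMinOn ⟨x₀, le_refl (f x₀)⟩ hK
  refine ⟨u, fun v => ?_⟩
  by_cases hv : f v ≤ f x₀
  · exact hmin hv
  · exact (hu.trans (not_le.1 hv).le : f u ≤ f v)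

lemma isBounded_sublevel_of_coercive {V : Type*} [SeminormedAddCommGroup V] {f : V → EReal}
    (hcoer : ∀ M : ℝ, ∃ R : ℝ, ∀ v : V, R ≤ ‖v‖ → (M : EReal) ≤ f v) {c : EReal}
    (hc : c ≠ ⊤) :
    Bornology.IsBounded {v | f v ≤ c} := by
  obtain ⟨R, hR⟩ := hcoer (c.toReal + 1)
  refine (isBounded_closedBall (x := (0 : V)) (r := R)).subset fun v hv => ?_
  rw [mem_closedBall_zero_iff]
  by_contra! hvR
  have : ((c.toReal + 1 : ℝ) : EReal) ≤ c.toReal :=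
    (hR v hvR.le).trans (hv.trans (EReal.le_coe_toReal hc))
  norm_cast at this
  linarith

theorem stmt7_general {V : Type*} [NormedAddCommGroup V] [NormedSpace ℝ V]
    (hrefl : Function.Surjective (NormedSpace.inclusionInDoubleDual ℝ V))
    (E : V → EReal)
    (hconv : ∀ x y : V, ∀ t : ℝ, 0 ≤ t → t ≤ 1 →
      E (t • x + (1 - t) • y) ≤ ((t : ℝ) : EReal) * E x + (((1 - t : ℝ)) : EReal) * E y)
    (hproper : (∀ v, E v ≠ ⊥) ∧ ∃ v, E v ≠ ⊤)
    (hlsc : LowerSemicontinuous E)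
    (hcoer : ∀ M : ℝ, ∃ R : ℝ, ∀ v : V, R ≤ ‖v‖ → (M : EReal) ≤ E v) :
    ∃ u : V, ∀ v : V, E u ≤ E v := by
  obtain ⟨-, v₀, hv₀⟩ := hproper
  have hweak : LowerSemicontinuous fun x : WeakSpace ℝ V => E ((toWeakSpace ℝ V).symm x) :=
    hlsc.comp_toWeakSpace_symm (quasiconvexOn_univ_of_le_convex_combination hconv)
  have hcompact : IsCompact {x : WeakSpace ℝ V | E ((toWeakSpace ℝ V).symm x) ≤ E v₀} :=
    isCompact_of_isBounded_of_surjective_inclusionInDoubleDual hrefl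
      (isBounded_sublevel_of_coercive hcoer hv₀) (hweak.isClosed_preimage (E v₀))
  obtain ⟨u, hu⟩ :=
    hweak.exists_forall_le_of_isCompact_sublevel (x₀ := toWeakSpace ℝ V v₀) hcompact
  exact ⟨(toWeakSpace ℝ V).symm u, fun v => hu (toWeakSpace ℝ V v)⟩

theorem stmt7 {V : Type*} [NormedAddCommGroup V] [NormedSpace ℝ V] [CompleteSpace V]
    (hrefl : Function.Surjective (NormedSpace.inclusionInDoubleDual ℝ V))
    (E : V → EReal)
    (hconv : ∀ x y : V, ∀ t : ℝ, 0 ≤ t → t ≤ 1 →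
      E (t • x + (1 - t) • y) ≤ ((t : ℝ) : EReal) * E x + (((1 - t : ℝ)) : EReal) * E y)
    (hproper : (∀ v, E v ≠ ⊥) ∧ ∃ v, E v ≠ ⊤)
    (hlsc : LowerSemicontinuous E)
    (hcoer : ∀ M : ℝ, ∃ R : ℝ, ∀ v : V, R ≤ ‖v‖ → (M : EReal) ≤ E v) :
    ∃ u : V, ∀ v : V, E u ≤ E v :=
  stmt7_general hrefl E hconv hproper hlsc hcoer
end

section
/- Let E : V → ℝ be convex and Gateaux differentiable on a real vector space V, with minimizer u over V and minimizer u_h over a subspace V_h ⊆ V. Then for every v_h ∈ V_h, E(u_h) − E(u) ≤ DE(u)[u − v_h] − DE(u_h)[u − v_h], i.e., the energy error is controlled by the difference of derivatives tested with the best-approximation error. -/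
/-!
Stationarity of `u` on `V` and of `u_h` on `V_h` kills `DE u (u - v_h)` and `DE u_h (u_h - v_h)`.
Since the directional derivative of a convex function is subadditive in the direction, splitting
`u - v_h = (u - u_h) + (u_h - v_h)` reduces the claim to the gradient inequality
`DE u_h (u - u_h) ≤ E u - E u_h`.
-/

open Set Filter

section LineDeriv

variable {V : Type*} [AddCommGroup V] [Module ℝ V] {E : V → ℝ} {x v : V} {f' : ℝ}

lemma ConvexOn.comp_add_smul (hE : ConvexOn ℝ univ E) (x v : V) :
    ConvexOn ℝ univ (fun t : ℝ => E (x + t • v)) := by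
  simpa [Function.comp_def, AffineMap.lineMap_apply_module', add_comm] using
    hE.comp_affineMap (AffineMap.lineMap x (x + v))

lemma ConvexOn.hasLineDerivAt_le_sub (hE : ConvexOn ℝ univ E) (hf : HasLineDerivAt ℝ E f' x v) :
    f' ≤ E (x + v) - E x := by
  simpa [slope] using
    (hE.comp_add_smul x v).le_slope_of_hasDerivAt (mem_univ 0) (mem_univ 1) one_pos hf

lemma HasLineDerivAt.eq_zero_of_forall_le (hf : HasLineDerivAt ℝ E f' x v)
    (hmin : ∀ t : ℝ, E x ≤ E (x + t • v)) : f' = 0 :=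
  IsLocalMin.hasDerivAt_eq_zero (.of_forall fun t => by simpa using hmin t) hf

lemma ConvexOn.hasLineDerivAt_add_le (hE : ConvexOn ℝ univ E) {a b : V} {fa fb : ℝ}
    (ha : HasLineDerivAt ℝ E fa x a) (hb : HasLineDerivAt ℝ E fb x b)
    (hab : HasLineDerivAt ℝ E f' x (a + b)) : f' ≤ fa + fb := by
  have hlim := ((ha.smul 2).tendsto_slope_zero_right.add
    (hb.smul 2).tendsto_slope_zero_right).div_const 2
  have hle := le_of_tendsto_of_tendsto hab.tendsto_slope_zero_right hlim <| by
    filter_upwards [self_mem_nhdsWithin] with t (ht : 0 < t)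
    have hmid := hE.2 (mem_univ (x + t • (2 : ℝ) • a)) (mem_univ (x + t • (2 : ℝ) • b))
      one_half_pos.le one_half_pos.le (add_halves 1)
    have hpt : (1 / 2 : ℝ) • (x + t • (2 : ℝ) • a) + (1 / 2 : ℝ) • (x + t • (2 : ℝ) • b)
        = x + t • (a + b) := by module
    rw [hpt, smul_eq_mul, smul_eq_mul] at hmid
    simp only [smul_eq_mul]
    calc t⁻¹ * (E (x + t • (a + b)) - E x)
        ≤ t⁻¹ * ((E (x + t • (2 : ℝ) • a) + E (x + t • (2 : ℝ) • b)) / 2 - E x) := by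
          gcongr; linarith
      _ = _ := by ring
  simp only [smul_eq_mul] at hle
  linarith

end LineDeriv

theorem stmt10 {V : Type*} [AddCommGroup V] [Module ℝ V]
    (E : V → ℝ) (hconv : ConvexOn ℝ Set.univ E)
    (DE : V → V → ℝ)
    (hDE : ∀ u v : V, HasDerivAt (fun t : ℝ => E (u + t • v)) (DE u v) 0)
    (V_h : Submodule ℝ V)
    (u : V) (hu : ∀ v : V, E u ≤ E v)
    (u_h : V) (hu_h : u_h ∈ V_h) (hmin : ∀ v ∈ V_h, E u_h ≤ E v) :
    ∀ v_h ∈ V_h, E u_h - E u ≤ DE u (u - v_h) - DE u_h (u - v_h) := by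
  intro v_h hv_h
  have hline : ∀ x w : V, HasLineDerivAt ℝ E (DE x w) x w := hDE
  have hstat : DE u (u - v_h) = 0 :=
    (hline u _).eq_zero_of_forall_le fun t => hu _
  have hstat_h : DE u_h (u_h - v_h) = 0 :=
    (hline u_h _).eq_zero_of_forall_le fun t =>
      hmin _ (V_h.add_mem hu_h (V_h.smul_mem t (V_h.sub_mem hu_h hv_h)))
  have hgrad : DE u_h (u - u_h) ≤ E u - E u_h := by
    simpa using hconv.hasLineDerivAt_le_sub (hline u_h (u - u_h))
  have hsplit : DE u_h (u - v_h) ≤ DE u_h (u - u_h) + DE u_h (u_h - v_h) :=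
    hconv.hasLineDerivAt_add_le (hline u_h _) (hline u_h _)
      (by simpa only [sub_add_sub_cancel] using hline u_h (u - v_h))
  linarith
end

section
/- Let p ≥ 2 and W ∈ C¹(ℝ^n) convex satisfying the convexity control (B3). Then for all α, β ∈ L^p(Ω; ℝ^n) on a finite measure space Ω, ‖DW(α) − DW(β)‖_{L^{p'}}² / (1 + ‖α‖_{L^p}^p + ‖β‖_{L^p}^p)^{(2−p')/p'} ≤ C ∫_Ω (W(β) − W(α) − DW(α)⋅(β − α)) dx, where p' = p/(p−1) and C depends only on c₅, p, |Ω|. -/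
/-!
Pointwise, (B3) says `|DW(α) - DW(β)|² ≤ c₅ D w` with the Bregman defect
`D = W(β) - W(α) - DW(α)⋅(β - α) ≥ 0` and the weight `w = 1 + |α|^{p-2} + |β|^{p-2}`.
Taking square roots and applying Hölder with `1/p' = 1/2 + 1/(2r)`, `r = p/(p-2)`, gives
`‖DW(α) - DW(β)‖_{p'}² ≤ c₅ ‖D‖₁ ‖w‖_r`. Finally `‖ |α|^{p-2} ‖_r = ‖α‖_p^{p-2}`, and
`(p-2)/p = (2-p')/p'`, so `‖w‖_r` is controlled by `(1 + ‖α‖_p^p + ‖β‖_p^p)^{(2-p')/p'}`.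
-/

open scoped RealInnerProductSpace ENNReal
open MeasureTheory

/-- The exponent `p / (p - 2)`, equal to `∞` for `p = 2` (as `0⁻¹ = ∞` in `ℝ≥0∞`). -/
noncomputable def weightExponent (p : ℝ) : ℝ≥0∞ := (ENNReal.ofReal ((p - 2) / p))⁻¹

theorem one_le_weightExponent {p : ℝ} (hp : 2 ≤ p) : 1 ≤ weightExponent p :=
  ENNReal.one_le_inv.mpr
    (ENNReal.ofReal_le_one.mpr ((div_le_one (by linarith)).mpr (by linarith)))

theorem holderTriple_two_weightExponent {p : ℝ} (hp : 2 ≤ p) :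
    ENNReal.HolderTriple 2 (2 * weightExponent p) (ENNReal.ofReal (p / (p - 1))) := by
  have hp1 : 0 < p - 1 := by linarith
  constructor
  rw [weightExponent, ENNReal.mul_inv (by simp) (by simp), inv_inv, ← ENNReal.ofReal_ofNat 2,
    ← ENNReal.ofReal_inv_of_pos (by norm_num), ← ENNReal.ofReal_inv_of_pos (by positivity),
    ← ENNReal.ofReal_mul (by norm_num), ← ENNReal.ofReal_add (by norm_num) (by positivity)]
  congr 1
  field_simp
  ring

theorem Real.rpow_le_rpow_div_of_rpow_le {x y p s : ℝ} (hx : 0 ≤ x) (hp : 0 < p) (hs : 0 ≤ s)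
    (h : x ^ p ≤ y) : x ^ s ≤ y ^ (s / p) := by
  calc x ^ s = (x ^ p) ^ (s / p) := by rw [← Real.rpow_mul hx, mul_div_cancel₀ _ hp.ne']
    _ ≤ y ^ (s / p) := by gcongr

section LpBounds

variable {Ω E : Type*} [MeasurableSpace Ω] {μ : Measure Ω} [NormedAddCommGroup E]

theorem eLpNorm_one_eq_ofReal_integral {u : Ω → ℝ} (hu : Integrable u μ) (h0 : 0 ≤ᵐ[μ] u) :
    eLpNorm u 1 μ = ENNReal.ofReal (∫ x, u x ∂μ) := by
  rw [eLpNorm_one_eq_lintegral_enorm, ofReal_integral_eq_lintegral_ofReal hu h0]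
  exact lintegral_congr_ae (h0.mono fun x hx => Real.enorm_of_nonneg hx)

theorem eLpNorm_sq_le_eLpNorm_one_mul_of_norm_sq_le_mul {f : Ω → E} {u v : Ω → ℝ}
    {q r : ℝ≥0∞} [ENNReal.HolderTriple 2 (2 * r) q]
    (hu : AEStronglyMeasurable u μ) (hv : AEStronglyMeasurable v μ)
    (h : ∀ᵐ x ∂μ, ‖f x‖ ^ 2 ≤ u x * v x) :
    eLpNorm f q μ ^ 2 ≤ eLpNorm u 1 μ * eLpNorm v r μ := by
  set F : Ω → ℝ := fun x => ‖u x‖ ^ (1 / 2 : ℝ)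
  set G : Ω → ℝ := fun x => ‖v x‖ ^ (1 / 2 : ℝ)
  have hfFG : ∀ᵐ x ∂μ, ‖f x‖ ≤ ‖(F • G) x‖ := by
    filter_upwards [h] with x hx
    have hsq : (F x * G x) ^ 2 = ‖u x‖ * ‖v x‖ := by
      simp only [F, G, mul_pow, ← Real.rpow_natCast, ← Real.rpow_mul (norm_nonneg _)]
      norm_num
    show ‖f x‖ ≤ ‖F x * G x‖
    rw [Real.norm_of_nonneg (by positivity)]
    refine (pow_le_pow_iff_left₀ (norm_nonneg _) (by positivity) two_ne_zero).mp ?_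
    rw [hsq, ← norm_mul]
    exact hx.trans (Real.le_norm_self _)
  have hF : eLpNorm F 2 μ = eLpNorm u 1 μ ^ (1 / 2 : ℝ) := by
    rw [eLpNorm_norm_rpow u (by norm_num), ← ENNReal.ofReal_ofNat 2,
      ← ENNReal.ofReal_mul (by norm_num)]
    norm_num
  have hG : eLpNorm G (2 * r) μ = eLpNorm v r μ ^ (1 / 2 : ℝ) := by
    rw [eLpNorm_norm_rpow v (by norm_num), mul_comm, ← mul_assoc, ← ENNReal.ofReal_ofNat 2,
      ← ENNReal.ofReal_mul (by norm_num)]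
    norm_num
  calc eLpNorm f q μ ^ 2 ≤ (eLpNorm F 2 μ * eLpNorm G (2 * r) μ) ^ 2 := by
        gcongr
        exact (eLpNorm_mono_ae hfFG).trans
          (eLpNorm_smul_le_mul_eLpNorm (hv.norm.aemeasurable.pow_const _).aestronglyMeasurable
            (hu.norm.aemeasurable.pow_const _).aestronglyMeasurable)
    _ = eLpNorm u 1 μ * eLpNorm v r μ := by
        rw [hF, hG, mul_pow, ← ENNReal.rpow_natCast, ← ENNReal.rpow_natCast,
          ← ENNReal.rpow_mul, ← ENNReal.rpow_mul]
        norm_num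

theorem eLpNorm_norm_rpow_sub_two_weightExponent_le {f : Ω → E} {p : ℝ} (hp : 2 ≤ p) :
    eLpNorm (fun x => ‖f x‖ ^ (p - 2)) (weightExponent p) μ
      ≤ eLpNorm f (ENNReal.ofReal p) μ ^ (p - 2) := by
  rcases hp.eq_or_lt with rfl | hp
  · simpa [weightExponent] using eLpNorm_le_of_ae_bound (p := ⊤) (μ := μ)
      (f := fun _ : Ω => (1 : ℝ)) (.of_forall fun _ => le_of_eq norm_one)
  · rw [eLpNorm_norm_rpow f (by linarith), weightExponent,
      ← ENNReal.ofReal_inv_of_pos (by positivity), ← ENNReal.ofReal_mul (by positivity),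
      inv_div, div_mul_cancel₀ _ (by linarith)]

theorem eLpNorm_weight_le [IsFiniteMeasure μ] {p : ℝ} (hp : 2 ≤ p) {a b : Ω → E}
    (ha : MemLp a (ENNReal.ofReal p) μ) (hb : MemLp b (ENNReal.ofReal p) μ) :
    eLpNorm (fun x => 1 + ‖a x‖ ^ (p - 2) + ‖b x‖ ^ (p - 2)) (weightExponent p) μ
      ≤ ENNReal.ofReal (((eLpNorm (fun _ => (1 : ℝ)) (weightExponent p) μ).toReal + 2)
        * (1 + (eLpNorm a (ENNReal.ofReal p) μ).toReal ^ p
          + (eLpNorm b (ENNReal.ofReal p) μ).toReal ^ p) ^ ((p - 2) / p)) := by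
  set A := eLpNorm a (ENNReal.ofReal p) μ
  set B := eLpNorm b (ENNReal.ofReal p) μ
  set N₁ := eLpNorm (fun _ => (1 : ℝ)) (weightExponent p) μ
  set E := 1 + A.toReal ^ p + B.toReal ^ p
  have hp2 : 0 ≤ p - 2 := by linarith
  have hAp := Real.rpow_nonneg (ENNReal.toReal_nonneg (a := A)) p
  have hBp := Real.rpow_nonneg (ENNReal.toReal_nonneg (a := B)) p
  have ha' := ha.aestronglyMeasurable
  have hb' := hb.aestronglyMeasurable
  have hN : eLpNorm (fun x => 1 + ‖a x‖ ^ (p - 2) + ‖b x‖ ^ (p - 2)) (weightExponent p) μ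
      ≤ N₁ + A ^ (p - 2) + B ^ (p - 2) := by
    refine (eLpNorm_add_le (by fun_prop) (by fun_prop) (one_le_weightExponent hp)).trans ?_
    gcongr
    · refine (eLpNorm_add_le (by fun_prop) (by fun_prop) (one_le_weightExponent hp)).trans ?_
      gcongr
      exact eLpNorm_norm_rpow_sub_two_weightExponent_le hp
    · exact eLpNorm_norm_rpow_sub_two_weightExponent_le hp
  have hN₁ : N₁ ≠ ⊤ := (memLp_const 1).eLpNorm_lt_top.ne
  have hA : A ^ (p - 2) ≠ ⊤ := ENNReal.rpow_ne_top_of_nonneg hp2 ha.eLpNorm_lt_top.ne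
  have hB : B ^ (p - 2) ≠ ⊤ := ENNReal.rpow_ne_top_of_nonneg hp2 hb.eLpNorm_lt_top.ne
  have hAE : A.toReal ^ (p - 2) ≤ E ^ ((p - 2) / p) :=
    Real.rpow_le_rpow_div_of_rpow_le ENNReal.toReal_nonneg (by linarith) hp2 (by linarith)
  have hBE : B.toReal ^ (p - 2) ≤ E ^ ((p - 2) / p) :=
    Real.rpow_le_rpow_div_of_rpow_le ENNReal.toReal_nonneg (by linarith) hp2 (by linarith)
  have hN₁E : N₁.toReal ≤ N₁.toReal * E ^ ((p - 2) / p) :=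
    le_mul_of_one_le_right ENNReal.toReal_nonneg
      (Real.one_le_rpow (by linarith) (div_nonneg hp2 (by linarith)))
  calc _ ≤ N₁ + A ^ (p - 2) + B ^ (p - 2) := hN
    _ = ENNReal.ofReal (N₁.toReal + A.toReal ^ (p - 2) + B.toReal ^ (p - 2)) := by
        rw [ENNReal.toReal_rpow, ENNReal.toReal_rpow, ← ENNReal.toReal_add hN₁ hA,
          ← ENNReal.toReal_add (by finiteness) hB, ENNReal.ofReal_toReal (by finiteness)]
    _ ≤ _ := ENNReal.ofReal_le_ofReal (by linarith)

end LpBounds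

theorem stmt12_general {n : ℕ} {Ω : Type*} [MeasurableSpace Ω] (μ : Measure Ω)
    [IsFiniteMeasure μ] (p c₅ : ℝ) (hp : 2 ≤ p) (hc₅ : 0 < c₅)
    (W : EuclideanSpace ℝ (Fin n) → ℝ)
    (hB3 : ∀ a b, ‖gradient W a - gradient W b‖ ^ 2 / (1 + ‖a‖ ^ (p - 2) + ‖b‖ ^ (p - 2))
      ≤ c₅ * (W b - W a - ⟪gradient W a, b - a⟫)) :
    ∃ C : ℝ, 0 < C ∧ ∀ α β : Ω → EuclideanSpace ℝ (Fin n),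
      MemLp α (ENNReal.ofReal p) μ → MemLp β (ENNReal.ofReal p) μ →
      Integrable (fun x => W (β x) - W (α x) - ⟪gradient W (α x), β x - α x⟫) μ →
      (eLpNorm (fun x => gradient W (α x) - gradient W (β x))
          (ENNReal.ofReal (p / (p - 1))) μ).toReal ^ 2 /
        (1 + (eLpNorm α (ENNReal.ofReal p) μ).toReal ^ p
           + (eLpNorm β (ENNReal.ofReal p) μ).toReal ^ p)
          ^ ((2 - p / (p - 1)) / (p / (p - 1)))
      ≤ C * ∫ x, (W (β x) - W (α x) - ⟪gradient W (α x), β x - α x⟫) ∂μ := by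
  have := holderTriple_two_weightExponent hp
  have hp2 : 0 ≤ p - 2 := by linarith
  have hweight_pos (a b : EuclideanSpace ℝ (Fin n)) : 0 < 1 + ‖a‖ ^ (p - 2) + ‖b‖ ^ (p - 2) := by
    positivity
  have hdefect_nonneg (a b) : 0 ≤ W b - W a - ⟪gradient W a, b - a⟫ :=
    (mul_nonneg_iff_of_pos_left hc₅).mp
      ((div_nonneg (sq_nonneg _) (hweight_pos a b).le).trans (hB3 a b))
  have hexp : (2 - p / (p - 1)) / (p / (p - 1)) = (p - 2) / p := by
    have : p - 1 ≠ 0 := by linarith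
    field_simp
    ring
  refine ⟨c₅ * ((eLpNorm (fun _ => (1 : ℝ)) (weightExponent p) μ).toReal + 2), by positivity,
    fun α β hα hβ hD => ?_⟩
  have hint : 0 ≤ ∫ x, (W (β x) - W (α x) - ⟪gradient W (α x), β x - α x⟫) ∂μ :=
    integral_nonneg fun x => hdefect_nonneg (α x) (β x)
  have hHolder := eLpNorm_sq_le_eLpNorm_one_mul_of_norm_sq_le_mul
    (f := fun x => gradient W (α x) - gradient W (β x)) (q := ENNReal.ofReal (p / (p - 1)))
    (r := weightExponent p) (hD.const_mul c₅).aestronglyMeasurable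
    (by have := hα.1; have := hβ.1; fun_prop)
    (.of_forall fun x => (div_le_iff₀ (hweight_pos (α x) (β x))).mp (hB3 (α x) (β x)))
  rw [eLpNorm_one_eq_ofReal_integral (hD.const_mul c₅)
    (.of_forall fun x => mul_nonneg hc₅.le (hdefect_nonneg _ _)), integral_const_mul] at hHolder
  rw [div_le_iff₀ (by positivity), hexp, ← ENNReal.toReal_pow]
  refine ENNReal.toReal_le_of_le_ofReal (by positivity) (hHolder.trans ?_)
  grw [eLpNorm_weight_le hp hα hβ, ← ENNReal.ofReal_mul (by positivity)]
  exact ENNReal.ofReal_le_ofReal (le_of_eq (by ring))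

theorem stmt12 {n : ℕ} {Ω : Type*} [MeasurableSpace Ω] (μ : Measure Ω)
    [IsFiniteMeasure μ] (p c₅ : ℝ) (hp : 2 ≤ p) (hc₅ : 0 < c₅)
    (W : EuclideanSpace ℝ (Fin n) → ℝ) (hW : ConvexOn ℝ Set.univ W)
    (hC1 : ContDiff ℝ 1 W)
    (hB3 : ∀ a b, ‖gradient W a - gradient W b‖ ^ 2 / (1 + ‖a‖ ^ (p - 2) + ‖b‖ ^ (p - 2))
      ≤ c₅ * (W b - W a - ⟪gradient W a, b - a⟫)) :
    ∃ C : ℝ, 0 < C ∧ ∀ α β : Ω → EuclideanSpace ℝ (Fin n),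
      MemLp α (ENNReal.ofReal p) μ → MemLp β (ENNReal.ofReal p) μ →
      Integrable (fun x => W (β x) - W (α x) - ⟪gradient W (α x), β x - α x⟫) μ →
      (eLpNorm (fun x => gradient W (α x) - gradient W (β x))
          (ENNReal.ofReal (p / (p - 1))) μ).toReal ^ 2 /
        (1 + (eLpNorm α (ENNReal.ofReal p) μ).toReal ^ p
           + (eLpNorm β (ENNReal.ofReal p) μ).toReal ^ p)
          ^ ((2 - p / (p - 1)) / (p / (p - 1)))
      ≤ C * ∫ x, (W (β x) - W (α x) - ⟪gradient W (α x), β x - α x⟫) ∂μ :=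
  stmt12_general μ p c₅ hp hc₅ W hB3
end

section
/- Let p ≥ 2 and suppose a, b ∈ ℝ^n satisfy the convexity control d(a,b) := |DW(a) − DW(b)|²/(1 + |a|^{p−2} + |b|^{p−2}) ≤ c₅(W(b) − W(a) − DW(a)⋅(b−a)) together with the two-sided growth c₁|a|^p − c₂ ≤ W(a) ≤ c₃|a|^p + c₄. Then there exists C > 0 depending only on the constants and p with |DW(a)| ≤ C(1 + |a|^{p−1}) for all a ∈ ℝ^n. -/
/-!
Since the left-hand side of (B3) is nonnegative, `∇W(a)` is a subgradient of `W` at `a`.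
Testing the subgradient inequality on the ball of radius `t = 1 + |a|` about `a` and using the
growth bounds (B2) gives `t |∇W(a)| ≤ c₃ (2t)^p + c₄ + c₂`; dividing by `t` leaves
`|∇W(a)| ≲ t^(p-1) + 1 ≲ 1 + |a|^(p-1)`.
-/

open scoped RealInnerProductSpace

theorem Real.one_add_rpow_le {s q : ℝ} (hs : 0 ≤ s) (hq : 1 ≤ q) :
    (1 + s) ^ q ≤ 2 ^ (q - 1) * (1 + s ^ q) := by
  lift s to NNReal using hs
  simpa using (NNReal.coe_le_coe.2 (NNReal.rpow_add_le_mul_rpow_add_rpow 1 s hq))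

section InnerProductSpace

variable {E : Type*} [NormedAddCommGroup E] [InnerProductSpace ℝ E]

theorem mul_norm_le_of_forall_inner_le {g : E} {r M : ℝ} (hr : 0 ≤ r)
    (h : ∀ v, ‖v‖ ≤ r → ⟪g, v⟫ ≤ M) : r * ‖g‖ ≤ M := by
  rcases eq_or_ne g 0 with rfl | hg
  · simpa using h 0 (by simpa using hr)
  have hgn : 0 < ‖g‖ := norm_pos_iff.2 hg
  have hv : ‖(r / ‖g‖) • g‖ = r := by
    rw [norm_smul, Real.norm_of_nonneg (by positivity), div_mul_cancel₀ _ hgn.ne']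
  have hgv : ⟪g, (r / ‖g‖) • g⟫ = r * ‖g‖ := by
    rw [real_inner_smul_right, real_inner_self_eq_norm_sq]
    field_simp
  exact hgv ▸ h _ hv.le

theorem mul_norm_le_of_subgradient_of_le_rpow {W : E → ℝ} {a g : E} {p c K r : ℝ}
    (hp : 0 ≤ p) (hc : 0 ≤ c) (hr : 0 ≤ r)
    (hsub : ∀ b, ⟪g, b - a⟫ ≤ W b - W a) (hW : ∀ b, W b ≤ c * ‖b‖ ^ p + K) :
    r * ‖g‖ ≤ c * (‖a‖ + r) ^ p + K - W a := by
  refine mul_norm_le_of_forall_inner_le hr fun v hv => ?_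
  have hav : ‖a + v‖ ^ p ≤ (‖a‖ + r) ^ p := by
    gcongr
    exact (norm_add_le a v).trans (by gcongr)
  calc ⟪g, v⟫ = ⟪g, (a + v) - a⟫ := by rw [add_sub_cancel_left]
    _ ≤ W (a + v) - W a := hsub (a + v)
    _ ≤ c * (‖a‖ + r) ^ p + K - W a := by nlinarith [hW (a + v)]

end InnerProductSpace

theorem Real.le_mul_one_add_rpow_of_mul_le {s x c K p : ℝ} (hs : 0 ≤ s) (hp : 2 ≤ p)
    (hc : 0 ≤ c) (hK : 0 ≤ K) (h : (1 + s) * x ≤ c * (2 * (1 + s)) ^ p + K) :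
    x ≤ (K + c * 2 ^ p * 2 ^ (p - 2)) * (1 + s ^ (p - 1)) := by
  have ht : 0 < 1 + s := by linarith
  have hsplit : (2 * (1 + s)) ^ p = 2 ^ p * ((1 + s) * (1 + s) ^ (p - 1)) := by
    rw [Real.mul_rpow zero_le_two ht.le, ← Real.rpow_one_add' ht.le (by linarith)]
    ring_nf
  have hpow : (1 + s) ^ (p - 1) ≤ 2 ^ (p - 2) * (1 + s ^ (p - 1)) := by
    simpa [sub_sub, one_add_one_eq_two] using Real.one_add_rpow_le hs (by linarith : 1 ≤ p - 1)
  have hx : x ≤ c * 2 ^ p * (1 + s) ^ (p - 1) + K := by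
    rw [hsplit] at h
    nlinarith
  have h1 : 1 ≤ 1 + s ^ (p - 1) := by have := Real.rpow_nonneg hs (p - 1); linarith
  calc x ≤ c * 2 ^ p * (2 ^ (p - 2) * (1 + s ^ (p - 1))) + K * 1 := by
        rw [mul_one]; exact hx.trans (by gcongr)
    _ ≤ c * 2 ^ p * (2 ^ (p - 2) * (1 + s ^ (p - 1))) + K * (1 + s ^ (p - 1)) := by gcongr
    _ = (K + c * 2 ^ p * 2 ^ (p - 2)) * (1 + s ^ (p - 1)) := by ring

theorem stmt19_general {n : ℕ} (p c₁ c₂ c₃ c₄ c₅ : ℝ) (hp : 2 ≤ p)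
    (hc₁ : 0 < c₁) (hc₂ : 0 ≤ c₂) (hc₃ : 0 < c₃) (hc₄ : 0 ≤ c₄) (hc₅ : 0 < c₅)
    (W : EuclideanSpace ℝ (Fin n) → ℝ)
    (hB3 : ∀ a b, ‖gradient W a - gradient W b‖ ^ 2 / (1 + ‖a‖ ^ (p - 2) + ‖b‖ ^ (p - 2))
      ≤ c₅ * (W b - W a - ⟪gradient W a, b - a⟫))
    (hB2 : ∀ a, c₁ * ‖a‖ ^ p - c₂ ≤ W a ∧ W a ≤ c₃ * ‖a‖ ^ p + c₄) :
    ∃ C : ℝ, 0 < C ∧ ∀ a, ‖gradient W a‖ ≤ C * (1 + ‖a‖ ^ (p - 1)) := by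
  refine ⟨c₂ + c₄ + c₃ * 2 ^ p * 2 ^ (p - 2), by positivity, fun a => ?_⟩
  have hsub : ∀ b, ⟪gradient W a, b - a⟫ ≤ W b - W a := fun b =>
    sub_nonneg.1 <| (mul_nonneg_iff_of_pos_left hc₅).1 <|
      (div_nonneg (sq_nonneg _) (by positivity)).trans (hB3 a b)
  have hWa : -c₂ ≤ W a := by
    have := Real.rpow_nonneg (norm_nonneg a) p
    nlinarith [(hB2 a).1]
  have hgrowth := mul_norm_le_of_subgradient_of_le_rpow (by linarith) hc₃.le
    (by positivity : 0 ≤ 1 + ‖a‖) hsub fun b => (hB2 b).2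
  refine Real.le_mul_one_add_rpow_of_mul_le (norm_nonneg a) hp hc₃.le (by positivity) ?_
  calc (1 + ‖a‖) * ‖gradient W a‖ ≤ c₃ * (‖a‖ + (1 + ‖a‖)) ^ p + c₄ - W a := hgrowth
    _ ≤ c₃ * (2 * (1 + ‖a‖)) ^ p + (c₂ + c₄) := by
      have hball : (‖a‖ + (1 + ‖a‖)) ^ p ≤ (2 * (1 + ‖a‖)) ^ p := by gcongr; linarith
      nlinarith

theorem stmt19 {n : ℕ} (p c₁ c₂ c₃ c₄ c₅ : ℝ) (hp : 2 ≤ p)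
    (hc₁ : 0 < c₁) (hc₂ : 0 ≤ c₂) (hc₃ : 0 < c₃) (hc₄ : 0 ≤ c₄) (hc₅ : 0 < c₅)
    (W : EuclideanSpace ℝ (Fin n) → ℝ) (hC1 : ContDiff ℝ 1 W)
    (hB3 : ∀ a b, ‖gradient W a - gradient W b‖ ^ 2 / (1 + ‖a‖ ^ (p - 2) + ‖b‖ ^ (p - 2))
      ≤ c₅ * (W b - W a - ⟪gradient W a, b - a⟫))
    (hB2 : ∀ a, c₁ * ‖a‖ ^ p - c₂ ≤ W a ∧ W a ≤ c₃ * ‖a‖ ^ p + c₄) :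
    ∃ C : ℝ, 0 < C ∧ ∀ a, ‖gradient W a‖ ≤ C * (1 + ‖a‖ ^ (p - 1)) :=
  stmt19_general p c₁ c₂ c₃ c₄ c₅ hp hc₁ hc₂ hc₃ hc₄ hc₅ W hB3 hB2
end
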